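/- arXiv:2401.09498 — 2 statements merged into one kernel-verified Lean document; each statement's English description precedes it below -/
import Mathlib

section
/- Let E be a real inner product space, let F : E → ℝ be differentiable with gradient ∇F that is L-Lipschitz (L ≥ 0), and let n ≥ 1 nodes be indexed by a finite set S of cardinality n. Let A ⊆ S be a nonempty set of accessible nodes of cardinality n₁, let w_i ∈ E for i ∈ S, let w̄ = (1/n)·Σ_{i∈S} w_i be the average of all local models, and let ŵ_A = (1/n₁)·Σ_{i∈A} w_i be the average over accessible nodes. Then the gradient of the average with inaccessibility deviates from the gradient of the full average by at most: ‖(n₁/n)·∇F(ŵ_A) + (1/n)·Σ_{i∈S\A} ∇F(w_i) − ∇F(w̄)‖ ≤ (L/n)·( n₁·‖ŵ_A − w̄‖ + Σ_{i∈S\A} ‖w_i − w̄‖ ). -/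
open Finset

/-! Because `n₁ + #(S \ A) = n`, subtracting `∇F(w̄)` splits over the `n` weighted terms of the
mixed average; the triangle inequality and the Lipschitz bound then apply term by term. -/

section MixedAverage

variable {ι V : Type*}

theorem mixed_average_sub_eq [AddCommGroup V] [Module ℝ V] (s : Finset ι) {c n : ℝ}
    (hn : n ≠ 0) (hcn : c + #s = n) (x z : V) (y : ι → V) :
    (c / n) • x + (1 / n) • ∑ i ∈ s, y i - z
      = (1 / n) • (c • (x - z) + ∑ i ∈ s, (y i - z)) := by
  have hz : z = (1 / n) • ((c + #s) • z) := by
    rw [hcn, smul_smul, one_div_mul_cancel hn, one_smul]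
  rw [sum_sub_distrib, sum_const, ← Nat.cast_smul_eq_nsmul ℝ, div_eq_mul_one_div, mul_comm,
    mul_smul]
  conv_lhs => rw [hz]
  simp only [add_smul, smul_add, smul_sub]
  abel

theorem norm_mixed_average_sub_le [SeminormedAddCommGroup V] [NormedSpace ℝ V] (s : Finset ι)
    {c n : ℝ} (hc : 0 ≤ c) (hn : 0 < n) (hcn : c + #s = n) (x z : V) (y : ι → V) :
    ‖(c / n) • x + (1 / n) • ∑ i ∈ s, y i - z‖
      ≤ (1 / n) * (c * ‖x - z‖ + ∑ i ∈ s, ‖y i - z‖) := by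
  rw [mixed_average_sub_eq s hn.ne' hcn, norm_smul, Real.norm_of_nonneg (by positivity)]
  gcongr
  calc ‖c • (x - z) + ∑ i ∈ s, (y i - z)‖
      ≤ ‖c • (x - z)‖ + ‖∑ i ∈ s, (y i - z)‖ := norm_add_le _ _
    _ ≤ c * ‖x - z‖ + ∑ i ∈ s, ‖y i - z‖ := by
      rw [norm_smul, Real.norm_of_nonneg hc]
      gcongr
      exact norm_sum_le _ _

end MixedAverage

theorem weight_divergence_bound_general
    {E : Type*} [NormedAddCommGroup E] [InnerProductSpace ℝ E]
    {ι : Type*} [Fintype ι] [DecidableEq ι]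
    (n : ℕ) (hn : 1 ≤ n) (hcard : Fintype.card ι = n)
    (gradF : E → E) (L : ℝ)
    (hlip : ∀ x y, ‖gradF x - gradF y‖ ≤ L * ‖x - y‖)
    (A : Finset ι)
    (w : ι → E)
    (wbar : E)
    (whatA : E) :
    ‖((A.card : ℝ) / n) • gradF whatA
        + (1 / (n : ℝ)) • ∑ i ∈ Aᶜ, gradF (w i) - gradF wbar‖
      ≤ (L / n) * ((A.card : ℝ) * ‖whatA - wbar‖ + ∑ i ∈ Aᶜ, ‖w i - wbar‖) := by
  have hcards : (#A : ℝ) + #Aᶜ = n := by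
    rw [← hcard]; exact_mod_cast card_add_card_compl A
  calc _ ≤ (1 / (n : ℝ)) * (#A * ‖gradF whatA - gradF wbar‖
          + ∑ i ∈ Aᶜ, ‖gradF (w i) - gradF wbar‖) :=
        norm_mixed_average_sub_le Aᶜ (Nat.cast_nonneg _) (by exact_mod_cast hn) hcards _ _ _
    _ ≤ (1 / (n : ℝ)) * (#A * (L * ‖whatA - wbar‖) + ∑ i ∈ Aᶜ, L * ‖w i - wbar‖) := by
        gcongr with i
        · exact hlip _ _
        · exact hlip _ _
    _ = (L / n) * ((#A : ℝ) * ‖whatA - wbar‖ + ∑ i ∈ Aᶜ, ‖w i - wbar‖) := by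
        rw [← mul_sum]; ring

/-- Proposition 1 (weight-divergence bound): the gradient of the average with
inaccessibility deviates from the gradient of the full average by at most
`(L/n) * (n₁ * ‖ŵ_A - w̄‖ + Σ_{i ∈ S\A} ‖w_i - w̄‖)`. -/
theorem weight_divergence_bound
    {E : Type*} [NormedAddCommGroup E] [InnerProductSpace ℝ E]
    {ι : Type*} [Fintype ι] [DecidableEq ι]
    (n : ℕ) (hn : 1 ≤ n) (hcard : Fintype.card ι = n)
    (F : E → ℝ) (gradF : E → E) (L : ℝ) (hL : 0 ≤ L)
    (hdiff : ∀ x, HasFDerivAt F (innerSL ℝ (gradF x)) x)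
    (hlip : ∀ x y, ‖gradF x - gradF y‖ ≤ L * ‖x - y‖)
    (A : Finset ι) (hA : A.Nonempty)
    (w : ι → E)
    (wbar : E) (hwbar : wbar = (1 / (n : ℝ)) • ∑ i, w i)
    (whatA : E) (hwhatA : whatA = (1 / (A.card : ℝ)) • ∑ i ∈ A, w i) :
    ‖((A.card : ℝ) / n) • gradF whatA
        + (1 / (n : ℝ)) • ∑ i ∈ Aᶜ, gradF (w i) - gradF wbar‖
      ≤ (L / n) * ((A.card : ℝ) * ‖whatA - wbar‖ + ∑ i ∈ Aᶜ, ‖w i - wbar‖) :=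
  weight_divergence_bound_general n hn hcard gradF L hlip A w wbar whatA
end

section
/- Let E be a real inner product space and let F : E → ℝ be differentiable, L-smooth (F(v) − F(w) ≤ ⟨v − w, ∇F(w)⟩ + (L/2)‖v − w‖²) and μ-strongly convex (F(v) − F(w) ≥ ⟨v − w, ∇F(w)⟩ + (μ/2)‖v − w‖²). Then for every step size η ≥ 0 and all points u, v, w* ∈ E, the gradient step taken at the surrogate point v satisfies: ‖u − η·∇F(v) − w*‖² ≤ ‖u − w*‖² − 2η·(F(u) − F(w*)) + L·η·‖u − v‖² − μ·η·‖v − w*‖² + η²·‖∇F(v)‖². -/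
open RealInnerProductSpace

/-- One-step descent inequality for a gradient step taken at a surrogate point `v`:
for an `L`-smooth and `μ`-strongly convex differentiable `F` and step size `η ≥ 0`,
`‖u - η∇F(v) - w*‖² ≤ ‖u - w*‖² - 2η(F(u) - F(w*)) + Lη‖u - v‖² - μη‖v - w*‖² + η²‖∇F(v)‖²`. -/
theorem surrogate_gradient_step_descent
    {E : Type*} [NormedAddCommGroup E] [InnerProductSpace ℝ E]
    (F : E → ℝ) (gradF : E → E) (L μ : ℝ)
    (hdiff : ∀ x, HasFDerivAt F (innerSL ℝ (gradF x)) x)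
    (hsmooth : ∀ v w : E, F v - F w ≤ ⟪v - w, gradF w⟫ + L / 2 * ‖v - w‖ ^ 2)
    (hconv : ∀ v w : E, F v - F w ≥ ⟪v - w, gradF w⟫ + μ / 2 * ‖v - w‖ ^ 2)
    (η : ℝ) (hη : 0 ≤ η) (u v wstar : E) :
    ‖u - η • gradF v - wstar‖ ^ 2 ≤
      ‖u - wstar‖ ^ 2 - 2 * η * (F u - F wstar) + L * η * ‖u - v‖ ^ 2
        - μ * η * ‖v - wstar‖ ^ 2 + η ^ 2 * ‖gradF v‖ ^ 2 := by
  have h1 := hsmooth u v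
  have h2 := hconv wstar v
  have hsplit : ⟪u - wstar, gradF v⟫ = ⟪u - v, gradF v⟫ + ⟪v - wstar, gradF v⟫ := by
    rw [← inner_add_left, sub_add_sub_cancel]
  have hflip : ⟪wstar - v, gradF v⟫ = - ⟪v - wstar, gradF v⟫ := by
    rw [← inner_neg_left, neg_sub]
  have key : F u - F wstar - L / 2 * ‖u - v‖ ^ 2 + μ / 2 * ‖v - wstar‖ ^ 2
      ≤ ⟪u - wstar, gradF v⟫ := by
    have hn : ‖wstar - v‖ = ‖v - wstar‖ := norm_sub_rev _ _
    rw [hsplit]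
    rw [hflip, hn] at h2
    linarith
  have hrw : u - η • gradF v - wstar = (u - wstar) - η • gradF v := by abel
  rw [hrw, norm_sub_sq_real, real_inner_smul_right, norm_smul, mul_pow]
  simp only [Real.norm_eq_abs, sq_abs]
  nlinarith [mul_le_mul_of_nonneg_left key hη]
end
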